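/- arXiv:2209.10908 — 3 statements merged into one kernel-verified Lean document; each statement's English description precedes it below -/
import Mathlib

section
/- The Laplace mechanism satisfies ε-differential privacy: for a query f : Database → ℝ^k with L1 sensitivity Δ₁f, adding independent Laplace noise with scale b = Δ₁f/ε to each coordinate of f(D) yields a mechanism M such that for all neighboring D, D' and all measurable S ⊆ ℝ^k, Pr[M(D) ∈ S] ≤ e^ε · Pr[M(D') ∈ S]. -/
open MeasureTheory Real

theorem lintegral_fin_nat_prod_eq_prod' {n : ℕ} {E : Fin n → Type*}
    [∀ i, MeasureSpace (E i)] [∀ i, SigmaFinite (volume : Measure (E i))]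
    (g : (i : Fin n) → E i → ENNReal) (hg : ∀ i, Measurable (g i)) :
    ∫⁻ x : (i : Fin n) → E i, ∏ i, g i (x i) = ∏ i, ∫⁻ x, g i x := by
  induction n with
  | zero =>
      simp [volume_pi, lintegral_const, Measure.pi_empty_univ]
  | succ n n_ih =>
      calc
        ∫⁻ x : (i : Fin (n+1)) → E i, ∏ i, g i (x i)
          = ∫⁻ x : E 0 × ((i : Fin n) → E (Fin.succ i)),
            g 0 x.1 * ∏ i : Fin n, g (Fin.succ i) (x.2 i)
            ∂((volume : Measure (E 0)).prod (Measure.pi fun _ : Fin n => volume)) := by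
          rw [volume_pi, ((measurePreserving_piFinSuccAbove
            (fun i => (volume : Measure (E i))) 0).symm).lintegral_map_equiv
            (fun x => ∏ i, g i (x i)) _]
          simp_rw [MeasurableEquiv.piFinSuccAbove_symm_apply, Fin.insertNthEquiv,
            Fin.prod_univ_succ, Fin.insertNth_zero, Equiv.coe_fn_mk, Fin.cons_succ,
            Fin.zero_succAbove, Fin.cons_zero]
          rfl
        _ = (∫⁻ x, g 0 x) * ∏ i : Fin n, ∫⁻ (x : E (Fin.succ i)), g (Fin.succ i) x := by
          rw [lintegral_prod_mul (f := g 0)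
            (g := fun y : (i : Fin n) → E (Fin.succ i) => ∏ i, g (Fin.succ i) (y i))
            (hg 0).aemeasurable
            (Measurable.aemeasurable (by
              exact Finset.measurable_prod _ fun i _ =>
                (hg _).comp (measurable_pi_apply i)))]
          rw [← n_ih _ fun i => hg _, volume_pi]
        _ = ∏ i, ∫⁻ x, g i x := by rw [Fin.prod_univ_succ]

theorem pi_withDensity' {k : ℕ} (g : Fin k → ℝ → ENNReal) (hg : ∀ i, Measurable (g i))
    [∀ i : Fin k, SigmaFinite ((volume : Measure ℝ).withDensity (g i))] :
    (Measure.pi fun i : Fin k => (volume : Measure ℝ).withDensity (g i)) =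
      (Measure.pi fun _ : Fin k => (volume : Measure ℝ)).withDensity
        (fun x => ∏ i, g i (x i)) := by
  refine Measure.pi_eq fun s hs => ?_
  rw [withDensity_apply _ (MeasurableSet.univ_pi hs),
    ← lintegral_indicator (MeasurableSet.univ_pi hs)]
  have key : ∀ x : Fin k → ℝ, (Set.pi Set.univ s).indicator (fun y => ∏ i, g i (y i)) x
      = ∏ i, (s i).indicator (g i) (x i) := by
    intro x
    by_cases hx : x ∈ Set.pi Set.univ s
    · rw [Set.indicator_of_mem hx]
      exact Finset.prod_congr rfl fun i _ =>
        (Set.indicator_of_mem (hx i (Set.mem_univ i)) _).symm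
    · rw [Set.indicator_of_notMem hx]
      rw [Set.mem_univ_pi, not_forall] at hx
      obtain ⟨i, hi⟩ := hx
      exact (Finset.prod_eq_zero (Finset.mem_univ i)
        (Set.indicator_of_notMem hi _)).symm
  simp_rw [key]
  rw [← volume_pi, lintegral_fin_nat_prod_eq_prod'
    (fun i => (s i).indicator (g i)) (fun i => (hg i).indicator (hs i))]
  exact Finset.prod_congr rfl fun i _ => by
    rw [lintegral_indicator (hs i), withDensity_apply _ (hs i)]

/-- The Laplace distribution with scale `b`, centered at 0, as a measure on `ℝ`
with density `(1/(2b)) exp (-|x|/b)` with respect to Lebesgue measure. -/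
noncomputable def lap (b : ℝ) : Measure ℝ :=
  volume.withDensity fun x => ENNReal.ofReal ((1 / (2 * b)) * exp (-|x| / b))

/-- The Laplace mechanism satisfies `ε`-differential privacy: for a query
`f : Database → ℝ^k` with L1 sensitivity at most `Δ`, adding i.i.d. Laplace
noise with scale `b = Δ/ε` to each coordinate gives a mechanism `M` with
`Pr[M(D) ∈ S] ≤ e^ε · Pr[M(D') ∈ S]` for all neighboring `D, D'` and
measurable `S ⊆ ℝ^k`. -/
theorem laplace_mechanism_dp
    {D : Type*} {k : ℕ}
    (Neighbor : D → D → Prop)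
    (f : D → (Fin k → ℝ)) (Δ ε : ℝ) (hΔ : 0 < Δ) (hε : 0 < ε)
    (hsens : ∀ d d', Neighbor d d' → ∑ i, |f d i - f d' i| ≤ Δ)
    (M : D → Measure (Fin k → ℝ))
    (hM : ∀ d, M d = (Measure.pi fun _ : Fin k => lap (Δ / ε)).map
      (fun η => f d + η)) :
    ∀ d d', Neighbor d d' → ∀ s : Set (Fin k → ℝ), MeasurableSet s →
      M d s ≤ ENNReal.ofReal (exp ε) * M d' s := by
  intro d d' hdd' s hs
  set b : ℝ := Δ / ε with hb_def
  have hb : 0 < b := div_pos hΔ hε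
  set gr : ℝ → ℝ := fun x => (1 / (2 * b)) * exp (-|x| / b) with hgr_def
  set g : ℝ → ENNReal := fun x => ENNReal.ofReal (gr x) with hg_def
  have hgrc : Continuous gr := by
    apply Continuous.mul continuous_const
    exact Real.continuous_exp.comp ((continuous_abs.neg).div_const b)
  have hgm : Measurable g := hgrc.measurable.ennreal_ofReal
  have hgr_nonneg : ∀ x, 0 ≤ gr x := fun x =>
    mul_nonneg (by positivity) (exp_nonneg _)
  have hlap : lap b = (volume : Measure ℝ).withDensity g := rfl
  have hpi : (Measure.pi fun _ : Fin k => lap b) =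
      (Measure.pi fun _ : Fin k => (volume : Measure ℝ)).withDensity
        (fun x => ∏ i, g (x i)) := by
    rw [hlap]
    exact pi_withDensity' (fun _ => g) (fun _ => hgm)
  have hrep : ∀ c : Fin k → ℝ,
      ((Measure.pi fun _ : Fin k => lap b).map (fun η => c + η)) s
        = ∫⁻ x, s.indicator (fun y => ∏ i, g (y i - c i)) x
            ∂(Measure.pi fun _ : Fin k => (volume : Measure ℝ)) := by
    intro c
    have hmeas : Measurable (fun η : Fin k → ℝ => c + η) := measurable_id.const_add c
    rw [Measure.map_apply hmeas hs, hpi,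
      withDensity_apply _ (hs.preimage hmeas),
      ← lintegral_indicator (hs.preimage hmeas)]
    have hshift : ∀ x : Fin k → ℝ,
        s.indicator (fun y => ∏ i, g (y i - c i)) (c + x)
          = ((fun η => c + η) ⁻¹' s).indicator (fun y => ∏ i, g (y i)) x := by
      intro x
      by_cases hx : c + x ∈ s
      · rw [Set.indicator_of_mem hx,
          Set.indicator_of_mem (show x ∈ (fun η => c + η) ⁻¹' s from hx)]
        exact Finset.prod_congr rfl fun i _ => by simp [Pi.add_apply]
      · rw [Set.indicator_of_notMem hx,
          Set.indicator_of_notMem (show x ∉ (fun η => c + η) ⁻¹' s from hx)]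
    rw [← lintegral_add_left_eq_self
      (fun x => s.indicator (fun y => ∏ i, g (y i - c i)) x) c]
    simp_rw [hshift]
  have hpt : ∀ y : Fin k → ℝ, (∏ i, g (y i - f d i))
      ≤ ENNReal.ofReal (exp ε) * ∏ i, g (y i - f d' i) := by
    intro y
    rw [hg_def]
    rw [← ENNReal.ofReal_prod_of_nonneg (fun i _ => hgr_nonneg _),
      ← ENNReal.ofReal_prod_of_nonneg (fun i _ => hgr_nonneg _),
      ← ENNReal.ofReal_mul (exp_nonneg _)]
    apply ENNReal.ofReal_le_ofReal
    rw [hgr_def]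
    simp only []
    rw [Finset.prod_mul_distrib, Finset.prod_mul_distrib, ← Real.exp_sum, ← Real.exp_sum,
      ← mul_assoc, mul_comm (exp ε), mul_assoc, ← Real.exp_add]
    apply mul_le_mul_of_nonneg_left _ (Finset.prod_nonneg fun i _ => by positivity)
    rw [Real.exp_le_exp]
    have hsum : ∑ i, |y i - f d' i| - ∑ i, |y i - f d i| ≤ Δ := by
      rw [← Finset.sum_sub_distrib]
      calc ∑ i, (|y i - f d' i| - |y i - f d i|)
          ≤ ∑ i, |f d i - f d' i| := by
            apply Finset.sum_le_sum
            intro i _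
            have := abs_sub_abs_le_abs_sub (y i - f d' i) (y i - f d i)
            have h2 : (y i - f d' i) - (y i - f d i) = f d i - f d' i := by ring
            rwa [h2] at this
        _ ≤ Δ := hsens d d' hdd'
    have hΔb : Δ = ε * b := by rw [hb_def]; field_simp
    rw [← Finset.sum_div, ← Finset.sum_div]
    have h2 := sub_div (∑ i, |y i - f d' i|) (∑ i, |y i - f d i|) b
    have h1 : (∑ i, |y i - f d' i| - ∑ i, |y i - f d i|) / b ≤ ε := by
      rw [div_le_iff₀ hb]
      linarith
    have h3 : ∑ x : Fin k, -|y x - f d x| = -∑ x : Fin k, |y x - f d x| := by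
      rw [Finset.sum_neg_distrib]
    have h4 : ∑ x : Fin k, -|y x - f d' x| = -∑ x : Fin k, |y x - f d' x| := by
      rw [Finset.sum_neg_distrib]
    rw [h3, h4, neg_div, neg_div]
    linarith
  rw [hM d, hM d', hrep (f d), hrep (f d')]
  calc (∫⁻ x, s.indicator (fun y => ∏ i, g (y i - f d i)) x
        ∂(Measure.pi fun _ : Fin k => (volume : Measure ℝ)))
      ≤ ∫⁻ x, ENNReal.ofReal (exp ε) * s.indicator (fun y => ∏ i, g (y i - f d' i)) x
        ∂(Measure.pi fun _ : Fin k => (volume : Measure ℝ)) := by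
        apply lintegral_mono
        intro x
        by_cases hx : x ∈ s
        · simp only [Set.indicator_of_mem hx]
          exact hpt x
        · simp only [Set.indicator_of_notMem hx, mul_zero, le_refl]
    _ = ENNReal.ofReal (exp ε) * ∫⁻ x, s.indicator (fun y => ∏ i, g (y i - f d' i)) x
        ∂(Measure.pi fun _ : Fin k => (volume : Measure ℝ)) :=
      lintegral_const_mul' _ _ ENNReal.ofReal_ne_top
end

section
/- Sum of independent Laplace random variables concentration bound: suppose γ₁, ..., γ_n are independent random variables with γ_i ~ Lap(b_i), let Y = Σ_i γ_i and b_M = max_i b_i. For any ν ≥ sqrt(Σ_i b_i²) and any 0 < λ < 2√2 · ν²/b_M, we have Pr[Y > λ] ≤ exp(−λ²/(8ν²)). -/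
open MeasureTheory ProbabilityTheory Real Set
open scoped ENNReal NNReal

lemma aux_integral_exp_neg_mul_Ioi {c : ℝ} (hc : 0 < c) :
    ∫ x in Ioi (0:ℝ), exp (-(c * x)) = 1 / c := by
  have h := integral_comp_mul_left_Ioi (fun x => exp (-x)) 0 hc
  simp only [mul_zero, smul_eq_mul] at h
  rw [h, integral_exp_neg_Ioi_zero, one_div, mul_one]

lemma aux_integrableOn_exp_mul_Iic {c : ℝ} (hc : 0 < c) :
    IntegrableOn (fun x => exp (c * x)) (Iic (0:ℝ)) := by
  have h1 : IntegrableOn (fun x => exp (-c * x)) (Ici (0:ℝ)) :=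
    (integrableOn_Ici_iff_integrableOn_Ioi).mpr (exp_neg_integrableOn_Ioi 0 hc)
  have hmp : MeasurePreserving (fun x : ℝ => -x)
      ((volume : Measure ℝ).restrict (Iic (0:ℝ))) ((volume : Measure ℝ).restrict (Ici 0)) := by
    have h2 : MeasurePreserving (fun x : ℝ => -x) volume volume :=
      Measure.measurePreserving_neg _
    have h3 := h2.restrict_preimage (measurableSet_Ici (a := (0:ℝ)))
    have : (fun x : ℝ => -x) ⁻¹' Ici 0 = Iic 0 := by
      ext x; simp
    rwa [this] at h3
  have h4 := (hmp.integrable_comp h1.aestronglyMeasurable).mpr h1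
  have : ((fun x => exp (-c * x)) ∘ (fun x : ℝ => -x)) = fun x => exp (c * x) := by
    ext x; simp [Function.comp]
  rwa [this] at h4

lemma aux_integral_exp_mul_Iic {c : ℝ} (hc : 0 < c) :
    ∫ x in Iic (0:ℝ), exp (c * x) = 1 / c := by
  have h := integral_comp_neg_Ioi (c := (0:ℝ)) (f := fun x => exp (c * x))
  simp only [neg_zero] at h
  rw [← h]
  have : ∀ x : ℝ, exp (c * (-x)) = exp (-(c * x)) := by intro x; ring_nf
  calc ∫ x in Ioi (0:ℝ), exp (c * (-x)) = ∫ x in Ioi (0:ℝ), exp (-(c * x)) := by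
        refine setIntegral_congr_fun measurableSet_Ioi fun x _ => by ring_nf
    _ = 1 / c := aux_integral_exp_neg_mul_Ioi hc

lemma one_div_le_exp_two_mul {x : ℝ} (hx0 : 0 ≤ x) (hx : x ≤ 1/2) :
    1 / (1 - x) ≤ exp (2 * x) := by
  have h1 : 0 < 1 - x := by linarith
  have heq : 1 / (1 - x) = 1 + x / (1 - x) := by field_simp; ring
  rw [heq]
  have h2 : x / (1 - x) + 1 ≤ exp (x / (1 - x)) := add_one_le_exp _
  have h3 : x / (1 - x) ≤ 2 * x := by
    rw [div_le_iff₀ h1]; nlinarith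
  calc 1 + x / (1 - x) ≤ exp (x / (1 - x)) := by linarith
    _ ≤ exp (2 * x) := exp_le_exp.mpr h3

lemma lap_mgf {b t : ℝ} (hb : 0 < b) (ht : |t| * b < 1) :
    Integrable (fun x => exp (t * x)) (lap b) ∧
    ∫ x, exp (t * x) ∂(lap b) = 1 / (1 - t ^ 2 * b ^ 2) := by
  have hb' : (0:ℝ) < 1 / b := by positivity
  have htabs : |t| < 1 / b := by rwa [lt_div_iff₀ hb]
  have ht1 : t < 1 / b := lt_of_le_of_lt (le_abs_self t) htabs
  have ht2 : -(1 / b) < t := by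
    have := neg_abs_le t
    have := abs_lt.mp htabs
    linarith [this.1]
  have hc1 : (0:ℝ) < 1 / b - t := by linarith
  have hc2 : (0:ℝ) < 1 / b + t := by linarith
  set r : ℝ → ℝ := fun x => (1 / (2 * b)) * exp (-|x| / b) with hr
  have hr0 : ∀ x, 0 ≤ r x := fun x => by positivity
  have hrm : Measurable r := by
    apply Measurable.const_mul
    exact (measurable_abs.neg.div_const b).exp
  have hfm : Measurable (fun x : ℝ => ENNReal.ofReal (r x)) := hrm.ennreal_ofReal
  have hflt : ∀ᵐ x ∂(volume : Measure ℝ), ENNReal.ofReal (r x) < ⊤ :=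
    Filter.Eventually.of_forall fun x => ENNReal.ofReal_lt_top
  set h : ℝ → ℝ := fun x => exp (t * x) * r x with hh
  -- pointwise identities
  have hIoi_eq : EqOn (fun x => (1 / (2 * b)) * exp (-((1 / b - t) * x))) h (Ioi 0) := by
    intro x hx
    have hax : |x| = x := abs_of_pos hx
    simp only [h, hh, r, hax]
    have e : rexp (t * x) * rexp (-x / b) = rexp (-((1 / b - t) * x)) := by
      rw [← exp_add]; congr 1; field_simp; ring
    rw [← e]; ring
  have hIic_eq : EqOn (fun x => (1 / (2 * b)) * exp ((1 / b + t) * x)) h (Iic 0) := by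
    intro x hx
    have hax : |x| = -x := abs_of_nonpos hx
    simp only [h, hh, r, hax]
    have e : rexp (t * x) * rexp (- -x / b) = rexp ((1 / b + t) * x) := by
      rw [← exp_add]; congr 1; field_simp; ring
    rw [← e]; ring
  have hIoi : IntegrableOn h (Ioi (0:ℝ)) := by
    refine IntegrableOn.congr_fun ?_ hIoi_eq measurableSet_Ioi
    have := (exp_neg_integrableOn_Ioi 0 hc1)
    have h2 : IntegrableOn (fun x => exp (-((1/b - t) * x))) (Ioi (0:ℝ)) := by
      refine this.congr_fun (fun x _ => by ring_nf) measurableSet_Ioi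
    exact h2.const_mul _
  have hIic : IntegrableOn h (Iic (0:ℝ)) := by
    refine IntegrableOn.congr_fun ?_ hIic_eq measurableSet_Iic
    exact (aux_integrableOn_exp_mul_Iic hc2).const_mul _
  have hint : Integrable h (volume : Measure ℝ) := by
    have := hIic.union hIoi
    rwa [Iic_union_Ioi, integrableOn_univ] at this
  constructor
  · rw [lap, integrable_withDensity_iff hfm hflt]
    refine hint.congr (Filter.Eventually.of_forall fun x => ?_)
    simp only [h, hh]
    rw [ENNReal.toReal_ofReal (hr0 x)]
  · rw [lap]
    have hcoe : (fun x : ℝ => ENNReal.ofReal (r x)) = fun x : ℝ => ((r x).toNNReal : ℝ≥0∞) := rfl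
    rw [hcoe, integral_withDensity_eq_integral_smul (hrm.real_toNNReal) _]
    have : ∀ x : ℝ, (r x).toNNReal • exp (t * x) = h x := by
      intro x
      simp only [NNReal.smul_def, Real.coe_toNNReal _ (hr0 x), smul_eq_mul, h, hh]
      ring
    rw [show (fun x => (r x).toNNReal • exp (t * x)) = h from funext this]
    have hsplit : ∫ x, h x = (∫ x in Iic (0:ℝ), h x) + ∫ x in Ioi (0:ℝ), h x := by
      rw [← setIntegral_union (Iic_disjoint_Ioi le_rfl) measurableSet_Ioi hIic hIoi,
        Iic_union_Ioi, setIntegral_univ]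
    rw [hsplit]
    have hI1 : ∫ x in Iic (0:ℝ), h x = (1 / (2 * b)) * (1 / (1 / b + t)) := by
      rw [← setIntegral_congr_fun measurableSet_Iic hIic_eq, integral_const_mul,
        aux_integral_exp_mul_Iic hc2]
    have hI2 : ∫ x in Ioi (0:ℝ), h x = (1 / (2 * b)) * (1 / (1 / b - t)) := by
      rw [← setIntegral_congr_fun measurableSet_Ioi hIoi_eq, integral_const_mul,
        aux_integral_exp_neg_mul_Ioi hc1]
    rw [hI1, hI2]
    have h0ab : 0 ≤ |t| * b := by positivity
    have h1ab : (|t| * b) ^ 2 < 1 := by nlinarith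
    have hsq : t ^ 2 * b ^ 2 < 1 := by rw [mul_pow, sq_abs] at h1ab; linarith
    have hne : 1 - t ^ 2 * b ^ 2 ≠ 0 := ne_of_gt (by linarith)
    have hb0 : b ≠ 0 := hb.ne'
    have htb1 : t * b < 1 := lt_of_le_of_lt (mul_le_mul_of_nonneg_right (le_abs_self t) hb.le) ht
    have htb2 : -1 < t * b := by
      have : -t * b ≤ |t| * b := mul_le_mul_of_nonneg_right (neg_le_abs t) hb.le
      nlinarith
    have hp : (0:ℝ) < 1 + t * b := by linarith
    have hm : (0:ℝ) < 1 - t * b := by linarith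
    have e1 : 1 / (1 / b + t) = b / (1 + t * b) := by
      rw [div_eq_div_iff hc2.ne' hp.ne']; field_simp
    have e2 : 1 / (1 / b - t) = b / (1 - t * b) := by
      rw [div_eq_div_iff hc1.ne' hm.ne']; field_simp
    rw [e1, e2]
    rw [show 1 - t ^ 2 * b ^ 2 = (1 - t * b) * (1 + t * b) by ring]
    field_simp [show (1 + b * t) ≠ 0 by rw [mul_comm]; exact hp.ne', show (1 - b * t) ≠ 0 by rw [mul_comm]; exact hm.ne']
    ring

/-- Concentration for a sum of independent Laplace variables (Chan et al.):
if `γᵢ ~ Lap(bᵢ)` are independent, `Y = ∑ᵢ γᵢ`, `b_M = maxᵢ bᵢ`,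
`ν ≥ sqrt (∑ᵢ bᵢ²)` and `0 < λ < 2√2 · ν² / b_M`, then
`Pr[Y > λ] ≤ exp (-λ²/(8ν²))`. -/
theorem sum_laplace_concentration
    {Ω : Type*} [MeasurableSpace Ω] (μ : Measure Ω) [IsProbabilityMeasure μ]
    {n : ℕ} [NeZero n]
    (γ : Fin n → Ω → ℝ) (b : Fin n → ℝ) (hb : ∀ i, 0 < b i)
    (hmeas : ∀ i, Measurable (γ i))
    (hindep : iIndepFun γ μ)
    (hlaw : ∀ i, μ.map (γ i) = lap (b i))
    (ν lam bM : ℝ)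
    (hbM : bM = Finset.univ.sup' Finset.univ_nonempty b)
    (hν : Real.sqrt (∑ i, (b i) ^ 2) ≤ ν)
    (hlam₀ : 0 < lam) (hlam₁ : lam < 2 * Real.sqrt 2 * ν ^ 2 / bM) :
    μ {ω | lam < ∑ i, γ i ω} ≤ ENNReal.ofReal (exp (-(lam ^ 2) / (8 * ν ^ 2))) := by
  classical
  have hsumpos : 0 < ∑ i, (b i) ^ 2 :=
    Finset.sum_pos (fun i _ => by have := hb i; positivity) Finset.univ_nonempty
  have hν0 : 0 < ν := lt_of_lt_of_le (Real.sqrt_pos.mpr hsumpos) hν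
  have hν2 : ∑ i, (b i) ^ 2 ≤ ν ^ 2 := by
    calc ∑ i, (b i) ^ 2 = (Real.sqrt (∑ i, (b i) ^ 2)) ^ 2 := (Real.sq_sqrt hsumpos.le).symm
      _ ≤ ν ^ 2 := pow_le_pow_left₀ (Real.sqrt_nonneg _) hν 2
  obtain ⟨iM, _, hiM⟩ := Finset.exists_mem_eq_sup' (Finset.univ_nonempty (α := Fin n)) b
  have hbM0 : 0 < bM := by rw [hbM, hiM]; exact hb iM
  have hble : ∀ i, b i ≤ bM := fun i => hbM ▸ Finset.le_sup' b (Finset.mem_univ i)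
  set t : ℝ := lam / (4 * ν ^ 2) with htdef
  have ht0 : 0 < t := by positivity
  have h1 : lam * bM < 2 * Real.sqrt 2 * ν ^ 2 := (lt_div_iff₀ hbM0).mp hlam₁
  have hkey : t * bM < Real.sqrt 2 / 2 := by
    rw [htdef, div_mul_eq_mul_div, div_lt_div_iff₀ (by positivity) (by norm_num : (0:ℝ) < 2)]
    nlinarith [h1]
  have hhalf : (Real.sqrt 2 / 2) ^ 2 = 1 / 2 := by
    rw [div_pow, Real.sq_sqrt (by norm_num : (2:ℝ) ≥ 0)]; norm_num
  have hs2lt1 : Real.sqrt 2 / 2 < 1 := by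
    nlinarith [Real.sqrt_nonneg 2, hhalf]
  have htbM2 : (t * bM) ^ 2 < 1 / 2 := by
    nlinarith [Real.sqrt_nonneg 2, mul_pos ht0 hbM0]
  have htbi : ∀ i, t * b i ≤ t * bM := fun i =>
    mul_le_mul_of_nonneg_left (hble i) ht0.le
  have hxi : ∀ i, t ^ 2 * (b i) ^ 2 ≤ 1 / 2 := by
    intro i
    have h2 : (t * b i) ^ 2 ≤ (t * bM) ^ 2 := by
      have := htbi i
      nlinarith [mul_pos ht0 (hb i)]
    nlinarith
  have hti : ∀ i, |t| * b i < 1 := by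
    intro i
    rw [abs_of_pos ht0, ← mul_comm (b i) t, mul_comm (b i) t]
    calc t * b i ≤ t * bM := htbi i
      _ < Real.sqrt 2 / 2 := hkey
      _ < 1 := hs2lt1
  have hint : ∀ i, Integrable (fun ω => exp (t * γ i ω)) μ := by
    intro i
    have h1' := (lap_mgf (hb i) (hti i)).1
    rw [← hlaw i] at h1'
    exact (integrable_map_measure
      (Measurable.aestronglyMeasurable (by fun_prop))
      (hmeas i).aemeasurable).mp h1'
  have hmgf : ∀ i, mgf (γ i) μ t = 1 / (1 - t ^ 2 * (b i) ^ 2) := by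
    intro i
    have : mgf (γ i) μ t = ∫ x, exp (t * x) ∂(μ.map (γ i)) := by
      rw [mgf, integral_map (hmeas i).aemeasurable
        (Measurable.aestronglyMeasurable (by fun_prop))]
    rw [this, hlaw i, (lap_mgf (hb i) (hti i)).2]
  have hintS : Integrable (fun ω => exp (t * (∑ i, γ i) ω)) μ :=
    hindep.integrable_exp_mul_sum hmeas (fun i _ => hint i)
  have hchern := measure_ge_le_exp_mul_mgf (X := ∑ i, γ i) (μ := μ) lam ht0.le hintS
  have hmgfsum : mgf (∑ i, γ i) μ t = ∏ i, mgf (γ i) μ t :=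
    hindep.mgf_sum hmeas Finset.univ
  have hprod : ∏ i, mgf (γ i) μ t ≤ exp (2 * t ^ 2 * ν ^ 2) := by
    have hpos : ∀ i, 0 < 1 - t ^ 2 * (b i) ^ 2 := fun i => by
      have := hxi i; linarith
    calc ∏ i, mgf (γ i) μ t ≤ ∏ i, exp (2 * (t ^ 2 * (b i) ^ 2)) := by
          apply Finset.prod_le_prod
          · intro i _; rw [hmgf i]; exact (one_div_pos.mpr (hpos i)).le
          · intro i _
            rw [hmgf i]
            exact one_div_le_exp_two_mul (by positivity) (hxi i)
      _ = exp (∑ i, 2 * (t ^ 2 * (b i) ^ 2)) := by rw [Real.exp_sum]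
      _ ≤ exp (2 * t ^ 2 * ν ^ 2) := by
          apply exp_le_exp.mpr
          have hsum_eq : ∑ i, 2 * (t ^ 2 * (b i) ^ 2) = 2 * t ^ 2 * ∑ i, (b i) ^ 2 := by
            rw [Finset.mul_sum]; exact Finset.sum_congr rfl (fun i _ => by ring)
          rw [hsum_eq]
          exact mul_le_mul_of_nonneg_left hν2 (by positivity)
  have hfinal : exp (-t * lam) * mgf (∑ i, γ i) μ t ≤ exp (-(lam ^ 2) / (8 * ν ^ 2)) := by
    rw [hmgfsum]
    calc exp (-t * lam) * ∏ i, mgf (γ i) μ t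
        ≤ exp (-t * lam) * exp (2 * t ^ 2 * ν ^ 2) :=
          mul_le_mul_of_nonneg_left hprod (exp_pos _).le
      _ = exp (-t * lam + 2 * t ^ 2 * ν ^ 2) := (exp_add _ _).symm
      _ = exp (-(lam ^ 2) / (8 * ν ^ 2)) := by
          congr 1
          rw [htdef]
          field_simp
          ring
  have hsub : μ {ω | lam < ∑ i, γ i ω} ≤ μ {ω | lam ≤ (∑ i, γ i) ω} := by
    apply measure_mono
    intro ω hω
    simp only [Set.mem_setOf_eq, Finset.sum_apply] at *
    exact le_of_lt hω
  refine le_trans hsub ?_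
  rw [← ENNReal.ofReal_toReal (measure_ne_top μ _)]
  exact ENNReal.ofReal_le_ofReal (hchern.trans hfinal)
end

section
/- Chernoff bound step for sums of independent Laplace variables: if γ_i ~ Lap(b_i) are independent, Y = Σ_i γ_i, and 0 < h ≤ 1/(2·max_i b_i), then Pr[Y > λ] ≤ exp(−hλ) · exp(2h² Σ_i b_i²); optimizing with h = λ/(4ν²) for ν² ≥ Σ_i b_i² (valid when λ ≤ 2√2 ν²/max_i b_i, which ensures h ≤ 1/(2 max_i b_i) up to constants) yields Pr[Y > λ] ≤ exp(−λ²/(8ν²)). -/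
open MeasureTheory ProbabilityTheory Real Set
open scoped ENNReal NNReal

lemma exp_integral_Ioi' {a : ℝ} (ha : 0 < a) :
    ∫ x in Ioi (0:ℝ), exp (-(a * x)) = 1 / a := by
  have := integral_comp_mul_left_Ioi (fun x => exp (-x)) 0 ha
  simp only [mul_zero] at this
  rw [this, integral_exp_neg_Ioi_zero, smul_eq_mul, mul_one, one_div]

lemma exp_integrableOn_Iic' {a : ℝ} (ha : 0 < a) :
    IntegrableOn (fun x : ℝ => exp (a * x)) (Iic (0:ℝ)) := by
  have h1 : IntegrableOn (fun x : ℝ => exp (-a * x)) (Ici (0:ℝ)) :=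
    (integrableOn_Ici_iff_integrableOn_Ioi (f := fun x : ℝ => exp (-a * x)) (b := 0)).2 (exp_neg_integrableOn_Ioi 0 ha)
  have h_map : ((volume : Measure ℝ).restrict (Ici 0)).map Neg.neg
      = (volume : Measure ℝ).restrict (Iic 0) := by
    conv => rhs; rw [← Measure.map_neg_eq_self (volume : Measure ℝ),
      measurableEmbedding_neg.restrict_map]
    simp
  rw [IntegrableOn, ← h_map, measurableEmbedding_neg.integrable_map_iff]
  simpa [Function.comp_def, mul_neg, neg_mul, IntegrableOn] using h1

lemma exp_integral_Iic' {a : ℝ} (ha : 0 < a) :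
    ∫ x in Iic (0:ℝ), exp (a * x) = 1 / a := by
  have := integral_comp_neg_Iic (0:ℝ) (fun x => exp (-(a * x)))
  simp only [mul_neg, neg_neg, neg_zero] at this
  rw [this, exp_integral_Ioi' ha]

lemma lap_exp {b : ℝ} (hb : 0 < b) {h : ℝ} (hh : 0 ≤ h) (hhb : h * b < 1) :
    Integrable (fun x => exp (h * x)) (lap b) ∧
    ∫ x, exp (h * x) ∂(lap b) = 1 / (1 - h ^ 2 * b ^ 2) := by
  set g : ℝ → ℝ := fun x => (1 / (2 * b)) * exp (-|x| / b) with hgdef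
  have hgc : Continuous g := continuous_const.mul ((continuous_abs.neg.div_const b).rexp)
  have hg0 : ∀ x, 0 ≤ g x := fun x => mul_nonneg (by positivity) (exp_pos _).le
  have hlap : lap b = volume.withDensity fun x => ((g x).toNNReal : ℝ≥0∞) := rfl
  have hmeasg : Measurable fun x => (g x).toNNReal := hgc.measurable.real_toNNReal
  have key : (fun x => (g x).toNNReal • exp (h * x)) = fun x => g x * exp (h * x) := by
    funext x; simp [NNReal.smul_def, Real.coe_toNNReal _ (hg0 x)]
  set F : ℝ → ℝ := fun x => g x * exp (h * x) with hFdef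
  have hb' : h < 1 / b := (lt_div_iff₀ hb).2 hhb
  have ha1 : 0 < 1 / b - h := sub_pos.2 hb'
  have ha2 : 0 < 1 / b + h := by positivity
  have eqIoi : EqOn (fun x => (1 / (2 * b)) * exp (-((1 / b - h) * x))) F (Ioi 0) := by
    intro x hx
    simp only [F, hgdef, mul_assoc, ← exp_add, abs_of_pos (mem_Ioi.1 hx)]
    congr 1
    field_simp
    ring
  have eqIic : EqOn (fun x => (1 / (2 * b)) * exp ((1 / b + h) * x)) F (Iic 0) := by
    intro x hx
    simp only [F, hgdef, mul_assoc, ← exp_add, abs_of_nonpos (mem_Iic.1 hx)]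
    congr 1
    field_simp
  have hIoi : IntegrableOn F (Ioi (0:ℝ)) := by
    have base : IntegrableOn (fun x => exp (-((1 / b - h) * x))) (Ioi (0:ℝ)) := by
      have := exp_neg_integrableOn_Ioi 0 ha1
      simp only [neg_mul] at this
      exact this
    exact IntegrableOn.congr_fun (base.const_mul (1 / (2 * b))) eqIoi measurableSet_Ioi
  have hIic : IntegrableOn F (Iic (0:ℝ)) := by
    have : IntegrableOn (fun x => (1 / (2 * b)) * exp ((1 / b + h) * x)) (Iic (0:ℝ)) :=
      (exp_integrableOn_Iic' ha2).const_mul (1 / (2 * b))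
    exact IntegrableOn.congr_fun this eqIic measurableSet_Iic
  have hF : Integrable F := by
    rw [← integrableOn_univ, ← Set.Iic_union_Ioi (a := (0:ℝ))]
    exact hIic.union hIoi
  have iIoi : ∫ x in Ioi (0:ℝ), F x = (1 / (2 * b)) * (1 / (1 / b - h)) := by
    rw [← setIntegral_congr_fun measurableSet_Ioi eqIoi, integral_const_mul, exp_integral_Ioi' ha1]
  have iIic : ∫ x in Iic (0:ℝ), F x = (1 / (2 * b)) * (1 / (1 / b + h)) := by
    rw [← setIntegral_congr_fun measurableSet_Iic eqIic, integral_const_mul, exp_integral_Iic' ha2]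
  have hne1 : 1 - h * b ≠ 0 := by nlinarith
  have hne2 : 1 + h * b ≠ 0 := by nlinarith [mul_nonneg hh hb.le]
  have itot : ∫ x, F x = 1 / (1 - h ^ 2 * b ^ 2) := by
    rw [← intervalIntegral.integral_Iic_add_Ioi hIic hIoi, iIic, iIoi]
    have : 1 - h ^ 2 * b ^ 2 = (1 - h * b) * (1 + h * b) := by ring
    rw [this]
    have e1 : 1 / b - h = (1 - h * b) / b := by rw [eq_div_iff hb.ne']; ring_nf; rw [mul_inv_cancel₀ hb.ne']
    have e2 : 1 / b + h = (1 + h * b) / b := by rw [eq_div_iff hb.ne']; ring_nf; rw [mul_inv_cancel₀ hb.ne']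
    rw [e1, e2, one_div_div, one_div_div]
    have hne1' : 1 - b * h ≠ 0 := by rw [mul_comm]; exact hne1
    field_simp
    ring
  constructor
  · rw [hlap, integrable_withDensity_iff_integrable_smul hmeasg]
    simpa [key] using hF
  · rw [hlap, integral_withDensity_eq_integral_smul hmeasg, key, itot]

lemma mgf_lap {Ω : Type*} [MeasurableSpace Ω] (μ : Measure Ω) {X : Ω → ℝ} {b : ℝ} (hb : 0 < b)
    (hX : Measurable X) (hlaw : μ.map X = lap b) {h : ℝ} (hh : 0 ≤ h) (hhb : h * b < 1) :
    Integrable (fun ω => exp (h * X ω)) μ ∧ mgf X μ h = 1 / (1 - h ^ 2 * b ^ 2) := by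
  obtain ⟨hint, hval⟩ := lap_exp hb hh hhb
  rw [← hlaw] at hint hval
  have hg : AEStronglyMeasurable (fun x => exp (h * x)) (μ.map X) :=
    (continuous_const.mul continuous_id).rexp.aestronglyMeasurable
  constructor
  · exact (integrable_map_measure hg hX.aemeasurable).1 hint
  · rw [mgf, ← integral_map hX.aemeasurable hg, hval]

lemma core_bound {Ω : Type*} [MeasurableSpace Ω] (μ : Measure Ω) [IsProbabilityMeasure μ]
    {n : ℕ} [NeZero n]
    (γ : Fin n → Ω → ℝ) (b : Fin n → ℝ) (hb : ∀ i, 0 < b i)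
    (hmeas : ∀ i, Measurable (γ i))
    (hindep : iIndepFun γ μ)
    (hlaw : ∀ i, μ.map (γ i) = lap (b i))
    (bM : ℝ) (hbM : bM = Finset.univ.sup' Finset.univ_nonempty b)
    (lam : ℝ) (h : ℝ) (hh : 0 < h) (hbd : h ^ 2 * bM ^ 2 ≤ 1 / 2) :
    μ {ω | lam < ∑ i, γ i ω} ≤
      ENNReal.ofReal (exp (-h * lam) * exp (2 * h ^ 2 * ∑ i, (b i) ^ 2)) := by
  have hbMpos : 0 < bM := by
    rw [hbM]
    exact lt_of_lt_of_le (hb ⟨0, Nat.pos_of_ne_zero (NeZero.ne n)⟩)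
      (Finset.le_sup' b (Finset.mem_univ _))
  have hble : ∀ i, b i ≤ bM := fun i => hbM ▸ Finset.le_sup' b (Finset.mem_univ i)
  have hhbM : h * bM ≤ 3 / 4 := by nlinarith [mul_self_nonneg (h * bM - 1)]
  have hhb : ∀ i, h * b i < 1 := by
    intro i
    have h1 : h * b i ≤ h * bM := mul_le_mul_of_nonneg_left (hble i) hh.le
    linarith
  have hlapmgf := fun i => mgf_lap μ (hb i) (hmeas i) (hlaw i) hh.le (hhb i)
  have hint : ∀ i, Integrable (fun ω => exp (h * γ i ω)) μ := fun i => (hlapmgf i).1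
  have hsum_int : Integrable (fun ω => exp (h * (∑ i, γ i) ω)) μ :=
    hindep.integrable_exp_mul_sum hmeas fun i _ => hint i
  have chern := measure_ge_le_exp_mul_mgf (μ := μ) (X := ∑ i, γ i) (t := h) lam hh.le hsum_int
  rw [hindep.mgf_sum hmeas Finset.univ] at chern
  have hmgfle : ∀ i, mgf (γ i) μ h ≤ exp (2 * h ^ 2 * (b i) ^ 2) := by
    intro i
    rw [(hlapmgf i).2]
    have hx0 : 0 ≤ h ^ 2 * (b i) ^ 2 := by positivity
    have hx2 : h ^ 2 * (b i) ^ 2 ≤ 1 / 2 := by nlinarith [mul_le_mul (hble i) (hble i) (hb i).le hbMpos.le, sq_nonneg h, mul_le_mul_of_nonneg_left (mul_le_mul (hble i) (hble i) (hb i).le hbMpos.le) (sq_nonneg h)]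
    have h1 : 0 < 1 - h ^ 2 * (b i) ^ 2 := by linarith
    rw [div_le_iff₀ h1]
    have hexp := add_one_le_exp (2 * (h ^ 2 * (b i) ^ 2))
    have e : 2 * (h ^ 2 * (b i) ^ 2) = 2 * h ^ 2 * (b i) ^ 2 := by ring
    rw [e] at hexp
    nlinarith [exp_pos (2 * h ^ 2 * (b i) ^ 2)]
  have hprod : ∏ i, mgf (γ i) μ h ≤ exp (2 * h ^ 2 * ∑ i, (b i) ^ 2) := by
    calc ∏ i, mgf (γ i) μ h ≤ ∏ i, exp (2 * h ^ 2 * (b i) ^ 2) :=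
          Finset.prod_le_prod (fun i _ => mgf_nonneg) (fun i _ => hmgfle i)
      _ = exp (∑ i, 2 * h ^ 2 * (b i) ^ 2) := (Real.exp_sum _ _).symm
      _ = exp (2 * h ^ 2 * ∑ i, (b i) ^ 2) := by rw [← Finset.mul_sum]
  calc μ {ω | lam < ∑ i, γ i ω} ≤ μ {ω | lam ≤ (∑ i, γ i) ω} := by
        refine measure_mono fun ω hω => ?_
        simp only [Set.mem_setOf_eq, Finset.sum_apply] at hω ⊢
        exact hω.le
    _ = ENNReal.ofReal (μ {ω | lam ≤ (∑ i, γ i) ω}).toReal :=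
        (ENNReal.ofReal_toReal (measure_ne_top μ _)).symm
    _ ≤ ENNReal.ofReal (exp (-h * lam) * ∏ i, mgf (γ i) μ h) := ENNReal.ofReal_le_ofReal chern
    _ ≤ ENNReal.ofReal (exp (-h * lam) * exp (2 * h ^ 2 * ∑ i, (b i) ^ 2)) :=
        ENNReal.ofReal_le_ofReal (mul_le_mul_of_nonneg_left hprod (exp_pos _).le)

/-- Chernoff bound step for sums of independent Laplace variables: if
`γᵢ ~ Lap(bᵢ)` are independent and `Y = ∑ᵢ γᵢ`, then
(1) for any `0 < h ≤ 1/(2·maxᵢ bᵢ)`,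
`Pr[Y > λ] ≤ exp (-hλ) · exp (2h² ∑ᵢ bᵢ²)`; and
(2) for any `ν² ≥ ∑ᵢ bᵢ²` and `0 < λ ≤ 2√2 ν²/maxᵢ bᵢ` (which makes the
optimized choice `h = λ/(4ν²)` admissible), `Pr[Y > λ] ≤ exp (-λ²/(8ν²))`. -/
theorem laplace_chernoff_step
    {Ω : Type*} [MeasurableSpace Ω] (μ : Measure Ω) [IsProbabilityMeasure μ]
    {n : ℕ} [NeZero n]
    (γ : Fin n → Ω → ℝ) (b : Fin n → ℝ) (hb : ∀ i, 0 < b i)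
    (hmeas : ∀ i, Measurable (γ i))
    (hindep : iIndepFun γ μ)
    (hlaw : ∀ i, μ.map (γ i) = lap (b i))
    (bM : ℝ) (hbM : bM = Finset.univ.sup' Finset.univ_nonempty b)
    (lam : ℝ) (hlam : 0 < lam) :
    (∀ h : ℝ, 0 < h → h ≤ 1 / (2 * bM) →
      μ {ω | lam < ∑ i, γ i ω} ≤
        ENNReal.ofReal (exp (-h * lam) * exp (2 * h ^ 2 * ∑ i, (b i) ^ 2))) ∧
    (∀ ν : ℝ, 0 < ν → (∑ i, (b i) ^ 2) ≤ ν ^ 2 →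
      lam ≤ 2 * Real.sqrt 2 * ν ^ 2 / bM →
      μ {ω | lam < ∑ i, γ i ω} ≤
        ENNReal.ofReal (exp (-(lam ^ 2) / (8 * ν ^ 2)))) := by
  have hbMpos : 0 < bM := by
    rw [hbM]
    exact lt_of_lt_of_le (hb ⟨0, Nat.pos_of_ne_zero (NeZero.ne n)⟩)
      (Finset.le_sup' b (Finset.mem_univ _))
  constructor
  · intro h hh hle
    refine core_bound μ γ b hb hmeas hindep hlaw bM hbM lam h hh ?_
    have : h * (2 * bM) ≤ 1 := by
      rw [← le_div_iff₀ (by positivity)] at *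
      exact hle
    nlinarith [mul_pos hh hbMpos]
  · intro ν hν hsum hlam2
    set h : ℝ := lam / (4 * ν ^ 2) with hdef
    have hh : 0 < h := by positivity
    have hsq2 : Real.sqrt 2 ^ 2 = 2 := Real.sq_sqrt (by norm_num)
    have hbd : h ^ 2 * bM ^ 2 ≤ 1 / 2 := by
      have hle : h ≤ Real.sqrt 2 / (2 * bM) := by
        rw [hdef, div_le_div_iff₀ (by positivity) (by positivity)]
        calc lam * (2 * bM) ≤ (2 * Real.sqrt 2 * ν ^ 2 / bM) * (2 * bM) := by
              have := mul_le_mul_of_nonneg_right hlam2 (by positivity : (0:ℝ) ≤ 2 * bM)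
              exact this
          _ = Real.sqrt 2 * (4 * ν ^ 2) := by field_simp; ring
      have h2 : h * bM ≤ Real.sqrt 2 / 2 := by
        have h3 := mul_le_mul_of_nonneg_right hle hbMpos.le
        have h4 : Real.sqrt 2 / (2 * bM) * bM = Real.sqrt 2 / 2 := by
          field_simp
        linarith [h4 ▸ h3]
      nlinarith [mul_pos hh hbMpos, Real.sqrt_nonneg 2]
    refine (core_bound μ γ b hb hmeas hindep hlaw bM hbM lam h hh hbd).trans
      (ENNReal.ofReal_le_ofReal ?_)
    rw [← Real.exp_add, Real.exp_le_exp]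
    have e : -h * lam + 2 * h ^ 2 * ν ^ 2 = -(lam ^ 2) / (8 * ν ^ 2) := by
      rw [hdef]; field_simp; ring
    have : 2 * h ^ 2 * (∑ i, (b i) ^ 2) ≤ 2 * h ^ 2 * ν ^ 2 :=
      mul_le_mul_of_nonneg_left hsum (by positivity)
    linarith [e.le, e.ge]
end
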